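/- Let {a_n}, {b_n} ⊂ ℝ³ and {p_n}, {q_n} ⊂ ℝ with a_n − b_n → a_∞ in ℝ³ and p_n − q_n → p_∞ in ℝ. Suppose {r_n} is a bounded sequence in H¹(ℝ³) such that (U(p_n)T_{a_n})^{-1} r_n ⇀ φ weakly and (U(q_n)T_{b_n})^{-1} r_n ⇀ 0 weakly in H¹(ℝ³). Then φ = 0. -/

import Mathlib

open Filter Topology

/-!
Moving both profiles into the frame of `(U(q_n)T_{b_n})⁻¹ r_n`, the pairing
`⟪(U(p_n)T_{a_n})⁻¹ r_n, ψ⟫` becomes `⟪(U(q_n)T_{b_n})⁻¹ r_n, U(p_n - q_n)T(a_n - b_n) ψ⟫`.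
The test vectors converge strongly to `U(p_∞)T(a_∞) ψ` and the left factors are bounded and
weakly null, so these pairings tend to `0`; hence `⟪φ, ψ⟫ = 0` for every `ψ`.
-/

theorem tendsto_inner_of_weakly_of_tendsto {𝕜 E ι : Type*} [RCLike 𝕜] [NormedAddCommGroup E]
    [InnerProductSpace 𝕜 E] {l : Filter ι} {x y : ι → E} {x₀ y₀ : E} {C : ℝ}
    (hbdd : ∀ᶠ i in l, ‖x i‖ ≤ C)
    (hx : ∀ ψ : E, Tendsto (fun i => (inner 𝕜 (x i) ψ : 𝕜)) l (𝓝 (inner 𝕜 x₀ ψ)))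
    (hy : Tendsto y l (𝓝 y₀)) :
    Tendsto (fun i => (inner 𝕜 (x i) (y i) : 𝕜)) l (𝓝 (inner 𝕜 x₀ y₀)) := by
  have hsmall : Tendsto (fun i => (inner 𝕜 (x i) (y i - y₀) : 𝕜)) l (𝓝 0) := by
    rw [tendsto_zero_iff_norm_tendsto_zero]
    refine squeeze_zero' (Eventually.of_forall fun _ => norm_nonneg _) ?_
      (by simpa using (tendsto_iff_norm_sub_tendsto_zero.1 hy).const_mul C)
    filter_upwards [hbdd] with i hi
    exact (norm_inner_le_norm _ _).trans (mul_le_mul_of_nonneg_right hi (norm_nonneg _))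
  simpa only [inner_sub_right, add_zero, add_sub_cancel] using (hx y₀).add hsmall

section Frames

variable {A B H : Type*} [AddCommGroup A] [AddCommGroup B] [NormedAddCommGroup H]
  [InnerProductSpace ℂ H] {U : A → H ≃ₗᵢ[ℂ] H} {T : B → H ≃ₗᵢ[ℂ] H}

theorem apply_apply_eq_apply_apply_shift
    (hUgrp : ∀ (s t : A) (f : H), U (s + t) f = U s (U t f))
    (hTgrp : ∀ (y z : B) (f : H), T (y + z) f = T y (T z f))
    (hUT : ∀ (t : A) (y : B) (f : H), U t (T y f) = T y (U t f)) (p q : A) (a b : B) (ψ : H) :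
    U q (T b (U (p - q) (T (a - b) ψ))) = U p (T a ψ) := by
  rw [← hUT, ← hUgrp, ← hTgrp, add_sub_cancel, add_sub_cancel]

theorem inner_symm_symm_eq_inner_shift
    (hUgrp : ∀ (s t : A) (f : H), U (s + t) f = U s (U t f))
    (hTgrp : ∀ (y z : B) (f : H), T (y + z) f = T y (T z f))
    (hUT : ∀ (t : A) (y : B) (f : H), U t (T y f) = T y (U t f)) (p q : A) (a b : B) (r ψ : H) :
    (inner ℂ ((T a).symm ((U p).symm r)) ψ : ℂ)
      = inner ℂ ((T b).symm ((U q).symm r)) (U (p - q) (T (a - b) ψ)) := by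
  simp only [LinearIsometryEquiv.inner_map_eq_flip, LinearIsometryEquiv.symm_symm,
    apply_apply_eq_apply_apply_shift hUgrp hTgrp hUT]

end Frames

/-- If `a_n - b_n → a_∞`, `p_n - q_n → p_∞`, `{r_n}` is bounded in `H¹(ℝ³)`,
`(U(p_n)T_{a_n})⁻¹ r_n ⇀ φ` and `(U(q_n)T_{b_n})⁻¹ r_n ⇀ 0` weakly, then `φ = 0`.
Here `U` is the free Schrödinger group and `T` the translation group on `H = H¹(ℝ³)`,
encoded via the group laws, commutation, and joint strong continuity. -/
theorem stmt4 {H : Type*} [NormedAddCommGroup H] [InnerProductSpace ℂ H]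
    (U : ℝ → H ≃ₗᵢ[ℂ] H) (T : EuclideanSpace ℝ (Fin 3) → H ≃ₗᵢ[ℂ] H)
    (hUgrp : ∀ (s t : ℝ) (f : H), U (s + t) f = U s (U t f))
    (hTgrp : ∀ (y z : EuclideanSpace ℝ (Fin 3)) (f : H), T (y + z) f = T y (T z f))
    (hUT : ∀ (t : ℝ) (y : EuclideanSpace ℝ (Fin 3)) (f : H), U t (T y f) = T y (U t f))
    (hjoint : ∀ f : H,
      Continuous fun ty : ℝ × EuclideanSpace ℝ (Fin 3) => U ty.1 (T ty.2 f))
    (a b : ℕ → EuclideanSpace ℝ (Fin 3)) (p q : ℕ → ℝ)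
    (aInf : EuclideanSpace ℝ (Fin 3)) (pInf : ℝ)
    (ha : Tendsto (fun n => a n - b n) atTop (nhds aInf))
    (hp : Tendsto (fun n => p n - q n) atTop (nhds pInf))
    (r : ℕ → H) (C : ℝ) (hbdd : ∀ n, ‖r n‖ ≤ C) (φ : H)
    (h1 : ∀ ψ : H,
      Tendsto (fun n => (inner ℂ ((T (a n)).symm ((U (p n)).symm (r n))) ψ : ℂ))
        atTop (nhds (inner ℂ φ ψ)))
    (h2 : ∀ ψ : H,
      Tendsto (fun n => (inner ℂ ((T (b n)).symm ((U (q n)).symm (r n))) ψ : ℂ))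
        atTop (nhds 0)) :
    φ = 0 := by
  suffices h : ∀ ψ : H, (inner ℂ φ ψ : ℂ) = 0 from inner_self_eq_zero.1 (h φ)
  intro ψ
  have hshift : Tendsto (fun n => U (p n - q n) (T (a n - b n) ψ)) atTop
      (𝓝 (U pInf (T aInf ψ))) :=
    ((hjoint ψ).tendsto (pInf, aInf)).comp (hp.prodMk_nhds ha)
  have hbdd' : ∀ᶠ n in atTop, ‖(T (b n)).symm ((U (q n)).symm (r n))‖ ≤ C :=
    Eventually.of_forall fun n => by simpa using hbdd n
  have hnull := tendsto_inner_of_weakly_of_tendsto (x₀ := 0) hbdd'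
    (fun ψ => by simpa only [inner_zero_left] using h2 ψ) hshift
  rw [inner_zero_left] at hnull
  refine tendsto_nhds_unique (h1 ψ) (hnull.congr fun n => ?_)
  exact (inner_symm_symm_eq_inner_shift hUgrp hTgrp hUT _ _ _ _ _ _).symm
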